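/- Let R be a commutative ring, let σ denote the formal power series σ(T) = Σ_{k≥1} (-1)^k T^k in R[[T]], let f = Σ_k a_k T^k be a formal power series in R[[T]], and let g = f∘σ with coefficients g = Σ_k b_k T^k. Then b_0 = a_0, and for every k ≥ 1, b_k = (-1)^k·Σ_{i=0}^{k-1} binomial(k-1, i)·a_{i+1}. -/

import Mathlib

open PowerSeries Finset

/-- `σ(T) = Σ_{k≥1} (-1)^k T^k = (1+T)⁻¹ - 1`. -/
noncomputable def sigma (R : Type*) [Ring R] : PowerSeries R :=
  PowerSeries.mk fun k => if k = 0 then 0 else (-1) ^ k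

/-- Substitution `f ∘ g` of a power series `g` with zero constant term
into a power series `f`: the `n`-th coefficient is `Σ_{j≤n} fⱼ · coeff n (g^j)`. -/
noncomputable def PowerSeries.comp {R : Type*} [CommSemiring R]
    (f g : PowerSeries R) : PowerSeries R :=
  PowerSeries.mk fun n => ∑ j ∈ range (n + 1), coeff (R := R) j f * coeff (R := R) n (g ^ j)

/-! `σ(T) = τ(-T)` for `τ(T) = T/(1-T) = X * mk 1`, and by the negative binomial series
`τ^(d+1) = T^(d+1)/(1-T)^(d+1)` has `n`-th coefficient `choose (n-1) d`. In degree `k ≥ 1`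
the constant term of `f` does not contribute to `f ∘ σ`. -/

namespace PowerSeries

theorem coeff_zero_comp {R : Type*} [CommSemiring R] (f g : PowerSeries R) :
    coeff 0 (f.comp g) = coeff 0 f := by
  simp [PowerSeries.comp]

theorem coeff_comp_of_ne_zero {R : Type*} [CommSemiring R] (f g : PowerSeries R) {n : ℕ}
    (hn : n ≠ 0) :
    coeff n (f.comp g) = ∑ i ∈ range n, coeff (i + 1) f * coeff n (g ^ (i + 1)) := by
  rw [PowerSeries.comp, coeff_mk, sum_range_succ', pow_zero, coeff_one, if_neg hn, mul_zero,
    add_zero]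

theorem coeff_X_mul_mk_one_pow_succ {R : Type*} [CommRing R] (d n : ℕ) :
    coeff n ((X * mk 1 : PowerSeries R) ^ (d + 1)) =
      if d < n then ((n - 1).choose d : R) else 0 := by
  rw [mul_pow, mk_one_pow_eq_mk_choose_add, coeff_X_pow_mul']
  by_cases h : d < n
  · rw [if_pos (Nat.succ_le_of_lt h), if_pos h, coeff_mk]
    congr 2
    omega
  · rw [if_neg (by omega), if_neg h]

end PowerSeries

theorem sigma_eq_rescale (R : Type*) [CommRing R] :
    sigma R = rescale (-1) (X * PowerSeries.mk 1) := by
  ext n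
  rcases n with _ | n
  · simp [sigma]
  · simp [sigma, coeff_rescale, coeff_succ_X_mul, pow_succ]

theorem coeff_sigma_pow_succ (R : Type*) [CommRing R] (d n : ℕ) :
    coeff n (sigma R ^ (d + 1)) = if d < n then (-1) ^ n * ((n - 1).choose d : R) else 0 := by
  rw [sigma_eq_rescale, ← map_pow, coeff_rescale, coeff_X_mul_mk_one_pow_succ]
  split_ifs <;> simp

/-- writing `f = Σ aₖ Tᵏ` and `f∘σ = Σ bₖ Tᵏ`, one has `b₀ = a₀` and
`bₖ = (-1)^k·Σ_{i=0}^{k-1} C(k-1, i)·a_{i+1}` for `k ≥ 1`. -/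
theorem comp_sigma_coeff {R : Type*} [CommRing R] (f : PowerSeries R) :
    coeff (R := R) 0 (f.comp (sigma R)) = coeff (R := R) 0 f ∧
    ∀ k, 1 ≤ k →
      coeff (R := R) k (f.comp (sigma R))
        = (-1) ^ k * ∑ i ∈ range k, ((k - 1).choose i : R) * coeff (R := R) (i + 1) f := by
  refine ⟨coeff_zero_comp f (sigma R), fun k hk => ?_⟩
  rw [coeff_comp_of_ne_zero f (sigma R) (by omega), mul_sum]
  refine sum_congr rfl fun i hi => ?_
  rw [coeff_sigma_pow_succ, if_pos (mem_range.mp hi)]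
  ring
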